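/- Let (X,Y) be a random pair with X valued in a separable Hilbert space and Y ∈ {−1,1}, and let X^{(d)} = P_{V_d}(X) be the projection onto the span of the first d elements of a Hilbert basis. Define the projected Bayes error L_d* = inf over measurable f : ℝ^d → {−1,1} of P(f(X^{(d)}) ≠ Y), and the Bayes error L* analogously for X. Then L_d* ≥ L* for every d, and L_d* is nonincreasing in d, and L_d* → L* as d → ∞. -/

import Mathlib

open Filter MeasureTheory
open scoped RealInnerProductSpace

/-!
Restricting to the first `d` coordinates only shrinks the class of classifiers, which gives
`L* ≤ L_d` and monotonicity. For the limit, fix a classifier `f` of `X` and let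
`A = {f ∘ X = 1}`. The σ-algebras `σ(X^{(d)})` form a filtration whose supremum makes `X`
measurable (expand `X` in the Hilbert basis), so by Lévy's upward theorem
`E[1_A | X^{(d)}] → 1_A` in `L¹`. Thresholding this conditional expectation at `1/2` yields a set
`B = {X^{(d)} ∈ S}` with `P(A ∆ B)` small (Markov), and the classifier equal to `1` on `S` and
`-1` off `S` errs at most where `f` errs or on `A ∆ B`.
-/

open Set
open scoped ENNReal Topology

abbrev BinaryClassifier (E : Type*) [MeasurableSpace E] :=
  {f : E → ℝ // Measurable f ∧ ∀ v, f v = 1 ∨ f v = -1}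

namespace BinaryClassifier

variable {E : Type*} [MeasurableSpace E]

instance : Nonempty (BinaryClassifier E) := ⟨⟨fun _ => 1, measurable_const, fun _ => Or.inl rfl⟩⟩

open Classical in
noncomputable def ofSet {S : Set E} (hS : MeasurableSet S) : BinaryClassifier E :=
  ⟨fun v => if v ∈ S then 1 else -1, Measurable.ite hS measurable_const measurable_const,
    fun v => by by_cases hv : v ∈ S <;> simp [hv]⟩

lemma ofSet_eq_of_mem_iff {F : Type*} [MeasurableSpace F] {S : Set F} (hS : MeasurableSet S)
    (f : BinaryClassifier E) {v : F} {w : E}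
    (h : v ∈ S ↔ f.1 w = 1) : (ofSet hS).1 v = f.1 w := by
  rcases f.2.2 w with hw | hw <;> simp_all [ofSet]

end BinaryClassifier

section BayesError

variable {Ω E F : Type*} [MeasurableSpace Ω] [MeasurableSpace E] [MeasurableSpace F]

noncomputable def bayesError (P : Measure Ω) (Z : Ω → E) (Y : Ω → ℝ) : ℝ :=
  ⨅ f : BinaryClassifier E, P.real {ω | f.1 (Z ω) ≠ Y ω}

variable (P : Measure Ω) {Z : Ω → E} (Y : Ω → ℝ)

lemma bayesError_le (f : BinaryClassifier E) : bayesError P Z Y ≤ P.real {ω | f.1 (Z ω) ≠ Y ω} :=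
  ciInf_le ⟨0, by rintro _ ⟨_, rfl⟩; exact measureReal_nonneg⟩ f

lemma bayesError_le_bayesError_comp {g : E → F} (hg : Measurable g) :
    bayesError P Z Y ≤ bayesError P (g ∘ Z) Y :=
  le_ciInf fun f => bayesError_le P Y ⟨f.1 ∘ g, f.2.1.comp hg, fun v => f.2.2 (g v)⟩

lemma bayesError_le_add_measureReal_symmDiff [IsFiniteMeasure P] (W : Ω → E) (Z : Ω → F)
    (f : BinaryClassifier E) {S : Set F} (hS : MeasurableSet S) :
    bayesError P Z Y ≤
      P.real {ω | f.1 (W ω) ≠ Y ω} + P.real (symmDiff {ω | f.1 (W ω) = 1} (Z ⁻¹' S)) := by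
  have hsub : {ω | (BinaryClassifier.ofSet hS).1 (Z ω) ≠ Y ω} ⊆
      {ω | f.1 (W ω) ≠ Y ω} ∪ symmDiff {ω | f.1 (W ω) = 1} (Z ⁻¹' S) := by
    intro ω hω
    by_contra h
    simp only [mem_union, mem_ofPred_eq, not_or, not_not, mem_symmDiff, mem_preimage,
      not_and, not_not] at h
    exact hω <| (BinaryClassifier.ofSet_eq_of_mem_iff hS f ⟨h.2.2, h.2.1⟩).trans h.1
  calc bayesError P Z Y ≤ P.real {ω | (BinaryClassifier.ofSet hS).1 (Z ω) ≠ Y ω} :=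
        bayesError_le P Y _
    _ ≤ _ := (measureReal_mono hsub).trans (measureReal_union_le _ _)

end BayesError

lemma half_le_abs_sub_indicator {Ω : Type*} {A : Set Ω} {h : Ω → ℝ} {ω : Ω}
    (hω : ω ∈ symmDiff A {ω | 1 / 2 < h ω}) : 1 / 2 ≤ |h ω - A.indicator 1 ω| := by
  rcases mem_symmDiff.1 hω with ⟨hA, hB⟩ | ⟨hB, hA⟩
  · have hh : h ω ≤ 1 / 2 := not_lt.1 hB
    rw [indicator_of_mem hA, Pi.one_apply, abs_sub_comm]
    exact le_abs.2 (.inl (by linarith))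
  · rw [indicator_of_notMem hA, sub_zero]
    exact le_abs.2 (.inl (le_of_lt hB))

theorem MeasureTheory.Filtration.exists_measure_symmDiff_lt {Ω : Type*} {m0 : MeasurableSpace Ω}
    {μ : Measure Ω} [IsFiniteMeasure μ] (ℱ : Filtration ℕ m0) {A : Set Ω}
    (hA : MeasurableSet[⨆ n, ℱ n] A) {ε : ℝ≥0∞} (hε : ε ≠ 0) :
    ∃ n, ∃ B, MeasurableSet[ℱ n] B ∧ μ (symmDiff A B) < ε := by
  set g := A.indicator (1 : Ω → ℝ)
  have hg : Integrable g μ := (integrable_const 1).indicator (iSup_le ℱ.le _ hA)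
  have hconv := hg.tendsto_eLpNorm_condExp (ℱ := ℱ) (stronglyMeasurable_one.indicator hA)
  have hpos : 0 < 2⁻¹ * ε := ENNReal.mul_pos (by simp) hε
  obtain ⟨n, hn⟩ := (hconv.eventually_lt_const hpos).exists
  refine ⟨n, {ω | 1 / 2 < μ[g | ℱ n] ω},
    measurableSet_lt measurable_const stronglyMeasurable_condExp.measurable, ?_⟩
  have hsub : symmDiff A {ω | 1 / 2 < μ[g | ℱ n] ω} ⊆ {ω | 2⁻¹ ≤ ‖(μ[g | ℱ n] - g) ω‖ₑ} := by
    intro ω hω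
    rw [mem_ofPred_eq, Real.enorm_eq_ofReal_abs, ← ENNReal.ofReal_ofNat 2,
      ← ENNReal.ofReal_inv_of_pos (by norm_num)]
    exact ENNReal.ofReal_le_ofReal (by simpa using half_le_abs_sub_indicator hω)
  have hmarkov := mul_meas_ge_le_pow_eLpNorm' μ one_ne_zero ENNReal.one_ne_top
    (((stronglyMeasurable_condExp (f := g) (μ := μ)).mono (ℱ.le n)).aestronglyMeasurable.sub
      hg.aestronglyMeasurable) 2⁻¹
  simp only [ENNReal.toReal_one, ENNReal.rpow_one] at hmarkov
  refine (ENNReal.mul_lt_mul_iff_right (a := 2⁻¹) (by simp) (by simp)).1 ?_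
  calc 2⁻¹ * μ (symmDiff A {ω | 1 / 2 < μ[g | ℱ n] ω})
      ≤ 2⁻¹ * μ {ω | 2⁻¹ ≤ ‖(μ[g | ℱ n] - g) ω‖ₑ} := by gcongr
    _ ≤ eLpNorm (μ[g | ℱ n] - g) 1 μ := hmarkov
    _ < 2⁻¹ * ε := hn

theorem exists_bayesError_lt_of_measurable_iSup {Ω E : Type*} {m0 : MeasurableSpace Ω}
    [MeasurableSpace E] {P : Measure Ω} [IsFiniteMeasure P] {F : ℕ → Type*}
    [∀ d, MeasurableSpace (F d)] (ℱ : Filtration ℕ m0) (Z : ∀ d, Ω → F d)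
    (hZ : ∀ d, ℱ d ≤ MeasurableSpace.comap (Z d) inferInstance) {W : Ω → E}
    (hW : Measurable[⨆ d, ℱ d] W) (Y : Ω → ℝ) (f : BinaryClassifier E) {ε : ℝ} (hε : 0 < ε) :
    ∃ d, bayesError P (Z d) Y < P.real {ω | f.1 (W ω) ≠ Y ω} + ε := by
  obtain ⟨d, B, hB, hAB⟩ := ℱ.exists_measure_symmDiff_lt (μ := P)
    (hW (f.2.1 (measurableSet_singleton 1))) (ENNReal.ofReal_pos.2 hε).ne'
  obtain ⟨S, hS, rfl⟩ := hZ d B hB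
  refine ⟨d, (bayesError_le_add_measureReal_symmDiff P Y W (Z d) f hS).trans_lt ?_⟩
  gcongr
  exact ENNReal.toReal_lt_of_lt_ofReal hAB

section HilbertCoordinates

variable {H : Type*} [NormedAddCommGroup H] [InnerProductSpace ℝ H]

def firstCoords (Ψ : ℕ → H) (d : ℕ) (x : H) : EuclideanSpace ℝ (Fin d) :=
  WithLp.toLp 2 fun j : Fin d => ⟪x, Ψ j⟫

def truncateCoords {d e : ℕ} (h : d ≤ e) (v : EuclideanSpace ℝ (Fin e)) :
    EuclideanSpace ℝ (Fin d) :=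
  WithLp.toLp 2 fun j : Fin d => v (Fin.castLE h j)

lemma continuous_firstCoords (Ψ : ℕ → H) (d : ℕ) : Continuous (firstCoords Ψ d) := by
  unfold firstCoords; fun_prop

lemma continuous_truncateCoords {d e : ℕ} (h : d ≤ e) : Continuous (truncateCoords h) := by
  unfold truncateCoords; fun_prop

lemma truncateCoords_comp_firstCoords (Ψ : ℕ → H) {d e : ℕ} (h : d ≤ e) :
    truncateCoords h ∘ firstCoords Ψ e = firstCoords Ψ d :=
  rfl

theorem Orthonormal.tendsto_sum_inner_smul [CompleteSpace H] {Ψ : ℕ → H} (hΨ : Orthonormal ℝ Ψ)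
    (hdense : ⊤ ≤ (Submodule.span ℝ (Set.range Ψ)).topologicalClosure) (x : H) :
    Tendsto (fun n => ∑ j : Fin n, ⟪x, Ψ j⟫ • Ψ j) atTop (𝓝 x) := by
  have hsum := (HilbertBasis.mk hΨ hdense).hasSum_repr x
  simp only [HilbertBasis.repr_apply_apply, HilbertBasis.coe_mk, real_inner_comm] at hsum
  simpa only [Finset.sum_range] using hsum.tendsto_sum_nat

variable [MeasurableSpace H] [BorelSpace H] {Ω : Type*} {m0 : MeasurableSpace Ω}

def coordFiltration (Ψ : ℕ → H) {X : Ω → H} (hX : Measurable X) : Filtration ℕ m0 where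
  seq d := MeasurableSpace.comap (firstCoords Ψ d ∘ X) inferInstance
  mono' _ e h := ((continuous_truncateCoords h).measurable.comp
    (comap_measurable (firstCoords Ψ e ∘ X))).comap_le
  le' d := ((continuous_firstCoords Ψ d).measurable.comp hX).comap_le

theorem measurable_iSup_coordFiltration [CompleteSpace H] {Ψ : ℕ → H} (hΨ : Orthonormal ℝ Ψ)
    (hdense : ⊤ ≤ (Submodule.span ℝ (Set.range Ψ)).topologicalClosure) {X : Ω → H}
    (hX : Measurable X) : Measurable[⨆ d, coordFiltration Ψ hX d] X := by
  refine @measurable_of_tendsto_metrizable' Ω H (⨆ d, coordFiltration Ψ hX d) _ _ _ _ _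
    (fun n ω => ∑ j : Fin n, firstCoords Ψ n (X ω) j • Ψ j) X atTop _ _ (fun n => ?_)
    (tendsto_pi_nhds.2 fun ω => hΨ.tendsto_sum_inner_smul hdense (X ω))
  have hsynth : Continuous fun v : EuclideanSpace ℝ (Fin n) => ∑ j : Fin n, v j • Ψ j := by
    fun_prop
  exact (hsynth.measurable.comp (comap_measurable (firstCoords Ψ n ∘ X))).mono
    (le_iSup (fun d => coordFiltration Ψ hX d) n) le_rfl

end HilbertCoordinates

theorem projected_bayes_error_tendsto_general {H : Type*} [NormedAddCommGroup H]
    [InnerProductSpace ℝ H] [CompleteSpace H]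
    [MeasurableSpace H] [BorelSpace H]
    {Ω : Type*} [MeasurableSpace Ω] (P : Measure Ω) [IsProbabilityMeasure P]
    (Ψ : ℕ → H) (hΨ : Orthonormal ℝ Ψ)
    (hcomplete : (Submodule.span ℝ (Set.range Ψ)).topologicalClosure = ⊤)
    (X : Ω → H) (Y : Ω → ℝ) (hX : Measurable X)
    (Lstar : ℝ)
    (hLstar : Lstar =
      ⨅ f : {f : H → ℝ // Measurable f ∧ ∀ v, f v = 1 ∨ f v = -1},
        (P {ω | f.1 (X ω) ≠ Y ω}).toReal)
    (Ld : ℕ → ℝ)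
    (hLd : ∀ d, Ld d =
      ⨅ f : {f : EuclideanSpace ℝ (Fin d) → ℝ //
              Measurable f ∧ ∀ v, f v = 1 ∨ f v = -1},
        (P {ω | f.1 (WithLp.toLp 2 (fun j : Fin d => ⟪X ω, Ψ (j : ℕ)⟫)) ≠ Y ω}).toReal) :
    (∀ d, Lstar ≤ Ld d) ∧ Antitone Ld ∧ Tendsto Ld atTop (nhds Lstar) := by
  replace hLstar : Lstar = bayesError P X Y := hLstar
  replace hLd : ∀ d, Ld d = bayesError P (firstCoords Ψ d ∘ X) Y := hLd
  have hle : ∀ d, Lstar ≤ Ld d := fun d => by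
    rw [hLstar, hLd]
    exact bayesError_le_bayesError_comp P Y (continuous_firstCoords Ψ d).measurable
  have hanti : Antitone Ld := fun d e h => by
    rw [hLd, hLd, ← truncateCoords_comp_firstCoords Ψ h, Function.comp_assoc]
    exact bayesError_le_bayesError_comp P Y (continuous_truncateCoords h).measurable
  refine ⟨hle, hanti, tendsto_order.2 ⟨fun a ha => .of_forall fun d => ha.trans_le (hle d), ?_⟩⟩
  intro a ha
  obtain ⟨f, hf⟩ := exists_lt_of_ciInf_lt (hLstar ▸ ha : bayesError P X Y < a)
  obtain ⟨d, hd⟩ := exists_bayesError_lt_of_measurable_iSup (P := P) (coordFiltration Ψ hX)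
    (fun d => firstCoords Ψ d ∘ X) (fun _ => le_rfl)
    (measurable_iSup_coordFiltration hΨ hcomplete.ge hX) Y f (sub_pos.2 hf)
  rw [add_sub_cancel] at hd
  exact eventually_atTop.2 ⟨d, fun e he => (hanti he).trans_lt (hLd d ▸ hd)⟩

/-- The Bayes error of the problem projected on the first `d` coordinates of a
Hilbert basis dominates the Bayes error, is nonincreasing in `d`, and
converges to the Bayes error as `d → ∞`. -/
theorem projected_bayes_error_tendsto {H : Type*} [NormedAddCommGroup H]
    [InnerProductSpace ℝ H] [CompleteSpace H]
    [MeasurableSpace H] [BorelSpace H]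
    {Ω : Type*} [MeasurableSpace Ω] (P : Measure Ω) [IsProbabilityMeasure P]
    (Ψ : ℕ → H) (hΨ : Orthonormal ℝ Ψ)
    (hcomplete : (Submodule.span ℝ (Set.range Ψ)).topologicalClosure = ⊤)
    (X : Ω → H) (Y : Ω → ℝ) (hX : Measurable X) (hY : Measurable Y)
    (hYval : ∀ ω, Y ω = 1 ∨ Y ω = -1)
    (Lstar : ℝ)
    (hLstar : Lstar =
      ⨅ f : {f : H → ℝ // Measurable f ∧ ∀ v, f v = 1 ∨ f v = -1},
        (P {ω | f.1 (X ω) ≠ Y ω}).toReal)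
    (Ld : ℕ → ℝ)
    (hLd : ∀ d, Ld d =
      ⨅ f : {f : EuclideanSpace ℝ (Fin d) → ℝ //
              Measurable f ∧ ∀ v, f v = 1 ∨ f v = -1},
        (P {ω | f.1 (WithLp.toLp 2 (fun j : Fin d => ⟪X ω, Ψ (j : ℕ)⟫)) ≠ Y ω}).toReal) :
    (∀ d, Lstar ≤ Ld d) ∧ Antitone Ld ∧ Tendsto Ld atTop (nhds Lstar) :=
  projected_bayes_error_tendsto_general P Ψ hΨ hcomplete X Y hX Lstar hLstar Ld hLd
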